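/- Case (VI)(iii), classification: Assume that for every character η of Γ with η|_Λ = ξ, the degree-r polynomial P_η(c) := c₀·c₁·⋯·c_{r−1} − 1 in the variable c = c₀ has r distinct roots. Then every irreducible case-VI representation is isomorphic (via a linear isomorphism intertwining X, Y and every ρ(h)) to L(η, c) for some character η of Γ with η|_Λ = ξ and some root c of P_η. -/

import Mathlib

noncomputable section

/-- `(V, ρ, X, Y)` is a representation of the common part of the rank-2 algebra `A(ξ)`:
`ρ` is a group homomorphism (recorded via multiplicativity and unitality),
`ρ(h)∘X = χ₁(h)·(X∘ρ(h))` and `ρ(h)∘Y = χ₂(h)·(Y∘ρ(h))` for all `h ∈ Γ`, and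
`ρ(g) = ξ(g)·id` for all `g ∈ Λ`. -/
def IsRep {Γ : Type*} [CommGroup Γ] (χ₁ χ₂ : Γ →* ℂˣ) (Λ : Subgroup Γ) (ξ : ↥Λ →* ℂˣ)
    {V : Type*} [AddCommGroup V] [Module ℂ V]
    (ρ : Γ → Module.End ℂ V) (X Y : Module.End ℂ V) : Prop :=
  (∀ a b : Γ, ρ (a * b) = ρ a * ρ b) ∧ ρ 1 = 1 ∧
  (∀ h : Γ, ρ h * X = (χ₁ h : ℂ) • (X * ρ h)) ∧
  (∀ h : Γ, ρ h * Y = (χ₂ h : ℂ) • (Y * ρ h)) ∧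
  ∀ g : Λ, ρ (g : Γ) = (ξ g : ℂ) • (1 : Module.End ℂ V)

/-- A subspace `W` is stable under `X`, `Y` and all `ρ(h)`. -/
def Stable2 {Γ : Type*} {V : Type*} [AddCommGroup V] [Module ℂ V]
    (ρ : Γ → Module.End ℂ V) (X Y : Module.End ℂ V) (W : Submodule ℂ V) : Prop :=
  (∀ v ∈ W, X v ∈ W) ∧ (∀ v ∈ W, Y v ∈ W) ∧ ∀ h : Γ, ∀ v ∈ W, ρ h v ∈ W

/-- Irreducibility: `V ≠ 0` and the only subspaces stable under `X`, `Y` and all `ρ(h)`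
are `0` and `V`. -/
def Irred2 {Γ : Type*} {V : Type*} [AddCommGroup V] [Module ℂ V]
    (ρ : Γ → Module.End ℂ V) (X Y : Module.End ℂ V) : Prop :=
  (∃ v : V, v ≠ 0) ∧ ∀ W : Submodule ℂ V, Stable2 ρ X Y W → W = ⊥ ∨ W = ⊤

/-- The sequence `c_i` defined by `c₀ = c` and
`c_i = q·(c_{i−1} + ν − ν·q^{2(i−1)}·γ)` for `i ≥ 1`. -/
def cseq (q ν γ c : ℂ) : ℕ → ℂ
  | 0 => c
  | i + 1 => q * (cseq q ν γ c i + ν - ν * q ^ (2 * i) * γ)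

/-- `(V, ρ, X, Y)` is a case-VI representation: a representation with in addition
`X^r = id`, `Y^r = id` and `X∘Y = q⁻¹·(Y∘X) + ν·(ρ(g₁g₂) − id)`, where `q = χ₁(g₁)`. -/
def IsRepVI {Γ : Type*} [CommGroup Γ] (g₁ g₂ : Γ) (χ₁ χ₂ : Γ →* ℂˣ) (ν : ℂ)
    (Λ : Subgroup Γ) (ξ : ↥Λ →* ℂˣ) (r : ℕ)
    {V : Type*} [AddCommGroup V] [Module ℂ V]
    (ρ : Γ → Module.End ℂ V) (X Y : Module.End ℂ V) : Prop :=
  IsRep χ₁ χ₂ Λ ξ ρ X Y ∧ X ^ r = 1 ∧ Y ^ r = 1 ∧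
    X * Y = (((χ₁ g₁ : ℂˣ) : ℂ))⁻¹ • (Y * X) + ν • (ρ (g₁ * g₂) - 1)

/-- The action of `h ∈ Γ` on `L(η, c)`, with `ρ(h)·f_i = η(h)·χ₁(h)^i·f_i` on the basis
`(f_i)_{i ∈ ℤ/rℤ}` of `ℤ/rℤ → ℂ`. -/
def wRho (r : ℕ) {Γ : Type*} [CommGroup Γ] (χ₁ η : Γ →* ℂˣ) (h : Γ) :
    Module.End ℂ (ZMod r → ℂ) where
  toFun v := fun i => (η h : ℂ) * (χ₁ h : ℂ) ^ i.val * v i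
  map_add' v w := by funext i; simp [mul_add]
  map_smul' a v := by funext i; simp [smul_eq_mul]; ring

/-- The operator `X` on `L(η, c)`, with `X·f_i = f_{i+1}` (indices modulo `r`). -/
def wX (r : ℕ) : Module.End ℂ (ZMod r → ℂ) where
  toFun v := fun i => v (i - 1)
  map_add' _ _ := rfl
  map_smul' _ _ := rfl

/-- The operator `Y` on `L(η, c)`, with `Y·f_i = c_i·f_{i−1}` (indices modulo `r`,
the index of `c` being read off via the canonical representative in `{0, …, r−1}`). -/
def wY (r : ℕ) (cs : ℕ → ℂ) : Module.End ℂ (ZMod r → ℂ) where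
  toFun v := fun j => cs ((j + 1 : ZMod r).val) * v (j + 1)
  map_add' v w := by funext j; simp [mul_add]
  map_smul' a v := by funext j; simp [smul_eq_mul]; ring


/-!
A common eigenvector `v` of the commuting operators `ρ(h)` and `YX` yields a character `η`
extending `ξ`, and the eigenvalue of `YX` fixes `c`. The relation between `X` and `Y` makes `Y` a
lowering operator, `Y(X^{n+1} v) = c_{n+1} X^n v`, while `ρ(h)` scales `X^n v` by
`η(h) χ₁(h)^n`. As `q` is a primitive `r`-th root of unity, the vectors `X^i v`, `i ∈ ℤ/rℤ`, are
eigenvectors of `ρ(g₁)` with distinct eigenvalues; their span is stable, hence all of `V`, and in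
this basis `X`, `Y`, `ρ` act as on `L(η, c)`. Finally `Y^r = 1` applied to `X^r v = v` forces
`c₀ ⋯ c_{r-1} = 1`.
-/

open Module Module.End

theorem Module.End.exists_common_eigenvector {K V ι : Type*} [Field K] [IsAlgClosed K]
    [AddCommGroup V] [Module K V] [FiniteDimensional K V] [Nontrivial V]
    (T : ι → End K V) (hT : ∀ i j, Commute (T i) (T j)) :
    ∃ v : V, v ≠ 0 ∧ ∀ i, ∃ μ : K, T i v = μ • v := by
  -- a minimal nonzero invariant subspace lies in an eigenspace of every `T i`
  let P : Set (Submodule K V) := {W | W ≠ ⊥ ∧ ∀ i, ∀ v ∈ W, T i v ∈ W}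
  obtain ⟨W, ⟨hW0, hWT⟩, hmin⟩ :=
    wellFounded_lt.has_min P ⟨⊤, top_ne_bot, fun _ _ _ => Submodule.mem_top⟩
  suffices h : ∀ i, ∃ μ : K, ∀ v ∈ W, T i v = μ • v by
    obtain ⟨v, hv, hv0⟩ := Submodule.exists_mem_ne_zero_of_ne_bot hW0
    exact ⟨v, hv0, fun i => (h i).imp fun μ hμ => hμ v hv⟩
  intro i
  have : Nontrivial W := Submodule.nontrivial_iff_ne_bot.2 hW0
  obtain ⟨μ, hμ⟩ := exists_eigenvalue ((T i).restrict (hWT i))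
  let E : Submodule K V := W ⊓ (T i).eigenspace μ
  have hE : E ∈ P := by
    refine ⟨?_, fun j v hv => ⟨hWT j v hv.1, mapsTo_genEigenspace_of_comm (hT i j) μ 1 hv.2⟩⟩
    obtain ⟨w, hw⟩ := hμ.exists_hasEigenvector
    rw [Submodule.ne_bot_iff]
    exact ⟨w, ⟨w.2, eigenspace_restrict_le_eigenspace _ _ μ ⟨w, hw.1, rfl⟩⟩, by simpa using hw.2⟩
  have hEW : E = W := by_contra fun hne => hmin E hE (lt_of_le_of_ne inf_le_left hne)
  exact ⟨μ, fun v hv => mem_eigenspace_iff.1 (hEW ▸ hv : v ∈ E).2⟩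

theorem exists_monoidHom_of_forall_apply_eq_smul {K G V : Type*} [Field K] [Group G]
    [AddCommGroup V] [Module K V] {ρ : G → End K V} (hmul : ∀ a b, ρ (a * b) = ρ a * ρ b)
    (hone : ρ 1 = 1) {v : V} (hv : v ≠ 0) (hρv : ∀ g, ∃ μ : K, ρ g v = μ • v) :
    ∃ η : G →* Kˣ, ∀ g, ρ g v = (η g : K) • v := by
  choose μ hμ using hρv
  have hinj := smul_left_injective K hv
  let η : G →* K :=
    { toFun := μ
      map_one' := hinj (by simp [← hμ, hone])
      map_mul' := fun a b => hinj <| show μ (a * b) • v = (μ a * μ b) • v by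
        rw [← hμ, hmul, mul_apply, hμ, map_smul, hμ, smul_smul, mul_comm] }
  exact ⟨η.toHomUnits, hμ⟩

theorem Module.End.apply_pow_apply_of_mul_eq_smul_mul {R M : Type*} [CommSemiring R]
    [AddCommMonoid M] [Module R M] {K X : End R M} {a γ : R} {v : M}
    (hKX : K * X = a • (X * K)) (hKv : K v = γ • v) (n : ℕ) :
    K ((X ^ n) v) = (γ * a ^ n) • (X ^ n) v := by
  induction n with
  | zero => simpa using hKv
  | succ n ih =>
    rw [pow_succ', mul_apply, ← mul_apply K, hKX, LinearMap.smul_apply, mul_apply, ih, map_smul,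
      smul_smul]
    ring_nf

theorem Module.Basis.equivFun_self_eq_single {ι R M : Type*} [Finite ι] [DecidableEq ι]
    [CommSemiring R] [AddCommMonoid M] [Module R M] (b : Basis ι R M) (i : ι) :
    b.equivFun (b i) = Pi.single i 1 := by
  rw [← Basis.equivFun_symm_single b i, LinearEquiv.apply_symm_apply]

theorem Module.Basis.equivFun_intertwines {ι R M : Type*} [Fintype ι] [DecidableEq ι]
    [CommSemiring R] [AddCommMonoid M] [Module R M] (b : Basis ι R M) {T : End R M}
    {T' : End R (ι → R)} (h : ∀ i, b.equivFun (T (b i)) = T' (Pi.single i 1)) (v : M) :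
    b.equivFun (T v) = T' (b.equivFun v) := by
  refine LinearMap.congr_fun (b.ext (f₁ := b.equivFun.toLinearMap ∘ₗ T)
    (f₂ := T' ∘ₗ b.equivFun.toLinearMap) fun i => ?_) v
  simp [h, b.equivFun_self_eq_single]

theorem Finset.prod_range_shift_of_apply_eq {M : Type*} [CommMonoid M] {f : ℕ → M} {m : ℕ}
    (h : f (m + 1) = f 0) : ∏ i ∈ range (m + 1), f (i + 1) = ∏ i ∈ range (m + 1), f i := by
  rw [prod_range_succ, h, prod_range_succ' f]

theorem cseq_eq_geom_sum (q ν γ c : ℂ) (n : ℕ) :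
    cseq q ν γ c n = q ^ n * c + ν * q * (∑ i ∈ Finset.range n, q ^ i)
      - ν * γ * q ^ n * (∑ i ∈ Finset.range n, q ^ i) := by
  induction n with
  | zero => simp [cseq]
  | succ n ih =>
    rw [cseq, ih, geom_sum_succ]
    linear_combination (ν * γ * q ^ (n + 1)) * geom_sum_mul q n

theorem cseq_periodic {q : ℂ} {r : ℕ} (hqr : q ^ r = 1) (hq1 : q ≠ 1) (ν γ c : ℂ) :
    Function.Periodic (cseq q ν γ c) r := by
  have hgeom : ∑ i ∈ Finset.range r, q ^ i = 0 := by rw [geom_sum_eq hq1, hqr, sub_self, zero_div]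
  intro n
  induction n with
  | zero => rw [zero_add, cseq_eq_geom_sum, hqr, hgeom]; simp [cseq]
  | succ n ih =>
    have hpow : q ^ (2 * (n + r)) = q ^ (2 * n) := by
      rw [mul_add, pow_add, pow_mul' q 2 r, hqr, one_pow, mul_one]
    rw [Nat.add_right_comm, cseq, cseq, ih, hpow]

-- The initial value of the sequence is the one for which `c₁ = μ`.
theorem apply_pow_succ_eq_cseq_smul {V : Type*} [AddCommGroup V] [Module ℂ V]
    {X Y K : End ℂ V} {q ν γ μ : ℂ} (hq : q ≠ 0)
    (hrel : X * Y = q⁻¹ • (Y * X) + ν • (K - 1)) (hKX : K * X = q ^ 2 • (X * K))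
    {v : V} (hKv : K v = γ • v) (hYXv : (Y * X) v = μ • v) (n : ℕ) :
    Y ((X ^ (n + 1)) v) = cseq q ν γ (q⁻¹ * μ - ν + ν * γ) (n + 1) • (X ^ n) v := by
  have hYX : Y * X = q • (X * Y - ν • (K - 1)) := by
    rw [hrel, add_sub_cancel_right, smul_smul, mul_inv_cancel₀ hq, one_smul]
  induction n with
  | zero =>
    rw [zero_add, pow_one, ← mul_apply, hYXv, pow_zero, one_apply]
    congr 1
    simp only [cseq]
    field_simp
    ring
  | succ n ih =>
    rw [pow_succ', mul_apply, ← mul_apply Y, hYX]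
    simp only [LinearMap.smul_apply, LinearMap.sub_apply, mul_apply, one_apply]
    rw [ih, apply_pow_apply_of_mul_eq_smul_mul hKX hKv, map_smul, ← mul_apply X, ← pow_succ',
      ← pow_mul]
    conv_rhs => rw [cseq]
    module

section PowOrbit

variable {K V : Type*} [Field K] [AddCommGroup V] [Module K V] {r : ℕ} {X : End K V}

def powOrbit (X : End K V) (v : V) (r : ℕ) (i : ZMod r) : V := (X ^ i.val) v

theorem powOrbit_natCast (hX : X ^ r = 1) (v : V) (n : ℕ) :
    powOrbit X v r n = (X ^ n) v := by
  rw [powOrbit, ZMod.val_natCast, ← pow_eq_pow_mod n hX]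

variable [NeZero r]

theorem apply_powOrbit_eq_powOrbit_add_one (hX : X ^ r = 1) (v : V) (i : ZMod r) :
    X (powOrbit X v r i) = powOrbit X v r (i + 1) := by
  rw [← ZMod.natCast_zmod_val i, ← Nat.cast_succ, powOrbit_natCast hX, powOrbit_natCast hX,
    pow_succ', mul_apply]

theorem apply_powOrbit_add_one_eq_smul {Y : End K V} {v : V} {c : ℕ → K} (hX : X ^ r = 1)
    (hc : Function.Periodic c r) (hY : ∀ n, Y ((X ^ (n + 1)) v) = c (n + 1) • (X ^ n) v)
    (i : ZMod r) : Y (powOrbit X v r (i + 1)) = c (i + 1).val • powOrbit X v r i := by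
  rw [← ZMod.natCast_zmod_val i, ← Nat.cast_succ, powOrbit_natCast hX, powOrbit_natCast hX, hY,
    ZMod.val_natCast, hc.map_mod_nat]

theorem linearIndependent_powOrbit {T : End K V} {q γ : K} (hq : IsPrimitiveRoot q r)
    (hγ : γ ≠ 0) (hX : X ^ r = 1) (hTX : T * X = q • (X * T)) {v : V} (hv : v ≠ 0)
    (hTv : T v = γ • v) : LinearIndependent K (powOrbit X v r) := by
  have hXinj : Function.Injective X :=
    ((End.isUnit_iff X).1 (IsUnit.of_pow_eq_one hX (NeZero.ne r))).1
  refine T.eigenvectors_linearIndependent' (fun i => γ * q ^ i.val) (fun i j hij => ?_) _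
    fun i => ⟨mem_eigenspace_iff.2 (apply_pow_apply_of_mul_eq_smul_mul hTX hTv _), ?_⟩
  · exact ZMod.val_injective r (hq.pow_inj (ZMod.val_lt i) (ZMod.val_lt j)
      (mul_left_cancel₀ hγ hij))
  · exact fun h => hv ((hXinj.iterate i.val) (by simpa [powOrbit, ← coe_pow] using h))

theorem prod_lowering_coeff_eq_one {Y : End K V} {v : V} (hv : v ≠ 0) {c : ℕ → K}
    (hX : X ^ r = 1) (hY : Y ^ r = 1) (hc : ∀ n, Y ((X ^ (n + 1)) v) = c (n + 1) • (X ^ n) v)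
    (hcr : c r = c 0) : ∏ i ∈ Finset.range r, c i = 1 := by
  have hpow (k : ℕ) : (Y ^ k) ((X ^ k) v) = (∏ i ∈ Finset.range k, c (i + 1)) • v := by
    induction k with
    | zero => simp
    | succ k ih =>
      rw [pow_succ Y, mul_apply, hc, map_smul, ih, smul_smul, Finset.prod_range_succ, mul_comm]
  obtain ⟨m, rfl⟩ := Nat.exists_eq_succ_of_ne_zero (NeZero.ne r)
  rw [← Finset.prod_range_shift_of_apply_eq hcr]
  refine smul_left_injective K hv ?_
  simpa [hX, hY] using (hpow (m + 1)).symm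

end PowOrbit

theorem wX_single (r : ℕ) (i : ZMod r) (a : ℂ) : wX r (Pi.single i a) = Pi.single (i + 1) a := by
  funext j
  simp [wX, Pi.single_apply, sub_eq_iff_eq_add]

theorem wY_single (r : ℕ) (cs : ℕ → ℂ) (i : ZMod r) (a : ℂ) :
    wY r cs (Pi.single (i + 1) a) = cs (i + 1).val • Pi.single i a := by
  funext j
  by_cases hj : j = i
  · subst hj; simp [wY]
  · simp [wY, hj]

theorem wRho_single (r : ℕ) {Γ : Type*} [CommGroup Γ] (χ₁ η : Γ →* ℂˣ) (h : Γ) (i : ZMod r)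
    (a : ℂ) : wRho r χ₁ η h (Pi.single i a) = ((η h : ℂ) * χ₁ h ^ i.val) • Pi.single i a := by
  funext j
  by_cases hj : j = i
  · subst hj; simp [wRho]
  · simp [wRho, hj]

section CaseVI

variable {Γ V : Type*} [AddCommGroup V] [Module ℂ V] {ρ : Γ → End ℂ V} {X Y : End ℂ V}

theorem Irred2.span_eq_top {ι : Type*} (hirr : Irred2 ρ X Y) {b : ι → V} {i₀ : ι} (hb : b i₀ ≠ 0)
    (hX : ∀ i, X (b i) ∈ Submodule.span ℂ (Set.range b))
    (hY : ∀ i, Y (b i) ∈ Submodule.span ℂ (Set.range b))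
    (hρ : ∀ h i, ρ h (b i) ∈ Submodule.span ℂ (Set.range b)) :
    Submodule.span ℂ (Set.range b) = ⊤ := by
  have hstable (T : End ℂ V) (hT : ∀ i, T (b i) ∈ Submodule.span ℂ (Set.range b)) :
      ∀ v ∈ Submodule.span ℂ (Set.range b), T v ∈ Submodule.span ℂ (Set.range b) :=
    fun _ hv => Submodule.span_le (p := (Submodule.span ℂ _).comap T) |>.2
      (Set.forall_mem_range.2 hT) hv
  refine (hirr.2 _ ⟨hstable X hX, hstable Y hY, fun h => hstable _ (hρ h)⟩).resolve_left ?_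
  exact (Submodule.ne_bot_iff _).2 ⟨b i₀, Submodule.subset_span ⟨i₀, rfl⟩, hb⟩

theorem Irred2.span_range_powOrbit_eq_top {r : ℕ} [NeZero r] (hirr : Irred2 ρ X Y)
    {χ η : Γ → ℂ} (hρX : ∀ h, ρ h * X = χ h • (X * ρ h)) (hX : X ^ r = 1) {v : V} (hv : v ≠ 0)
    (hρv : ∀ h, ρ h v = η h • v) {c : ℕ → ℂ} (hc : Function.Periodic c r)
    (hY : ∀ n, Y ((X ^ (n + 1)) v) = c (n + 1) • (X ^ n) v) :
    Submodule.span ℂ (Set.range (powOrbit X v r)) = ⊤ := by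
  have hmem (i : ZMod r) : powOrbit X v r i ∈ Submodule.span ℂ (Set.range (powOrbit X v r)) :=
    Submodule.subset_span ⟨i, rfl⟩
  refine hirr.span_eq_top (i₀ := 0) (by simpa [powOrbit] using hv)
    (fun i => apply_powOrbit_eq_powOrbit_add_one hX v i ▸ hmem _) (fun i => ?_) (fun h i => ?_)
  · rw [← sub_add_cancel i 1, apply_powOrbit_add_one_eq_smul hX hc hY]
    exact Submodule.smul_mem _ _ (hmem _)
  · rw [powOrbit, apply_pow_apply_of_mul_eq_smul_mul (hρX h) (hρv h)]
    exact Submodule.smul_mem _ _ (hmem _)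

variable [CommGroup Γ] {χ₁ χ₂ : Γ →* ℂˣ} {Λ : Subgroup Γ} {ξ : Λ →* ℂˣ}

theorem coe_apply_mul_eq_sq {g₁ g₂ : Γ} (hχ₂ : χ₂ = χ₁⁻¹) (h12 : χ₁ g₂ * χ₂ g₁ = 1) :
    (χ₁ (g₁ * g₂) : ℂ) = (χ₁ g₁ : ℂ) ^ 2 := by
  rw [hχ₂, MonoidHom.inv_apply, mul_inv_eq_one] at h12
  rw [map_mul, h12, Units.val_mul, sq]

theorem IsRep.commute_Y_mul_X (hrep : IsRep χ₁ χ₂ Λ ξ ρ X Y) (hχ₂ : χ₂ = χ₁⁻¹) (h : Γ) :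
    Commute (ρ h) (Y * X) := by
  obtain ⟨-, -, hX, hY, -⟩ := hrep
  have hχ : (χ₂ h : ℂ) * χ₁ h = 1 := by simp [hχ₂]
  calc ρ h * (Y * X) = ((χ₂ h : ℂ) * χ₁ h) • (Y * (X * ρ h)) := by
        rw [← mul_assoc, hY, smul_mul_assoc, mul_assoc, hX, mul_smul_comm, smul_smul]
    _ = Y * X * ρ h := by rw [hχ, one_smul, mul_assoc]

theorem IsRep.exists_eigenvector [FiniteDimensional ℂ V] [Nontrivial V]
    (hrep : IsRep χ₁ χ₂ Λ ξ ρ X Y) (hχ₂ : χ₂ = χ₁⁻¹) :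
    ∃ v : V, v ≠ 0 ∧ ∃ η : Γ →* ℂˣ, (∀ g : Λ, η g = ξ g) ∧ (∀ h, ρ h v = (η h : ℂ) • v) ∧
      ∃ μ : ℂ, (Y * X) v = μ • v := by
  obtain ⟨v, hv, hvT⟩ := exists_common_eigenvector (fun o : Option Γ => o.elim (Y * X) ρ)
    (by
      rintro (_ | a) (_ | b)
      exacts [Commute.refl _, (hrep.commute_Y_mul_X hχ₂ b).symm, hrep.commute_Y_mul_X hχ₂ a,
        by simp only [Option.elim, Commute, SemiconjBy, ← hrep.1, mul_comm]])
  obtain ⟨η, hη⟩ :=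
    exists_monoidHom_of_forall_apply_eq_smul hrep.1 hrep.2.1 hv fun g => hvT (some g)
  refine ⟨v, hv, η, fun g => Units.ext (smul_left_injective ℂ hv ?_), hη, hvT none⟩
  simp [← hη, hrep.2.2.2.2 g]

end CaseVI

theorem caseVI_classification_general {Γ : Type*} [CommGroup Γ] (g₁ g₂ : Γ)
    (χ₁ χ₂ : Γ →* ℂˣ) (hχ₂ : χ₂ = χ₁⁻¹) (h12 : χ₁ g₂ * χ₂ g₁ = 1)
    (r : ℕ) (hr : 1 < r)
    (hq : IsPrimitiveRoot ((χ₁ g₁ : ℂˣ) : ℂ) r)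
    (ν : ℂ)
    (Λ : Subgroup Γ) (ξ : ↥Λ →* ℂˣ)
    (V : Type*) [AddCommGroup V] [Module ℂ V] [FiniteDimensional ℂ V]
    (ρ : Γ → Module.End ℂ V) (X Y : Module.End ℂ V)
    (hrep : IsRepVI g₁ g₂ χ₁ χ₂ ν Λ ξ r ρ X Y) (hirr : Irred2 ρ X Y) :
    ∃ η : Γ →* ℂˣ, (∀ g : Λ, η (g : Γ) = ξ g) ∧
      ∃ c : ℂ, c ≠ 0 ∧
        (∏ i ∈ Finset.range r,
          cseq ((χ₁ g₁ : ℂˣ) : ℂ) ν ((η (g₁ * g₂) : ℂˣ) : ℂ) c i = 1) ∧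
        ∃ φ : V ≃ₗ[ℂ] (ZMod r → ℂ),
          (∀ v : V, φ (X v) = wX r (φ v)) ∧
          (∀ v : V, φ (Y v) =
            wY r (cseq ((χ₁ g₁ : ℂˣ) : ℂ) ν ((η (g₁ * g₂) : ℂˣ) : ℂ) c) (φ v)) ∧
          ∀ (h : Γ) (v : V), φ (ρ h v) = wRho r χ₁ η h (φ v) := by
  obtain ⟨hrep, hXr, hYr, hrel⟩ := hrep
  have : NeZero r := ⟨by omega⟩
  have : Nontrivial V := let ⟨v, hv⟩ := hirr.1; nontrivial_of_ne v 0 hv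
  have hρX (h : Γ) : ρ h * X = (χ₁ h : ℂ) • (X * ρ h) := hrep.2.2.1 h
  obtain ⟨v, hv, η, hηΛ, hρv, μ, hμ⟩ := hrep.exists_eigenvector hχ₂
  set q : ℂ := ((χ₁ g₁ : ℂˣ) : ℂ)
  set γ : ℂ := ((η (g₁ * g₂) : ℂˣ) : ℂ)
  set cs := cseq q ν γ (q⁻¹ * μ - ν + ν * γ)
  have hladder : ∀ n, Y ((X ^ (n + 1)) v) = cs (n + 1) • (X ^ n) v :=
    apply_pow_succ_eq_cseq_smul (Units.ne_zero _) hrel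
      (coe_apply_mul_eq_sq hχ₂ h12 ▸ hρX (g₁ * g₂)) (hρv _) hμ
  have hper : Function.Periodic cs r := cseq_periodic hq.pow_eq_one (hq.ne_one hr) _ _ _
  let b := Basis.mk (linearIndependent_powOrbit hq (η g₁).ne_zero hXr (hρX g₁) hv (hρv g₁))
    (hirr.span_range_powOrbit_eq_top hρX hXr hv hρv hper hladder).ge
  have hb (i : ZMod r) : b i = powOrbit X v r i := Basis.mk_apply _ _ i
  have hprod :=
    prod_lowering_coeff_eq_one hv hXr hYr hladder (by simpa only [zero_add] using hper 0)
  refine ⟨η, hηΛ, q⁻¹ * μ - ν + ν * γ,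
    Finset.prod_ne_zero_iff.1 (hprod ▸ one_ne_zero) 0 (by simp [NeZero.pos]),
    hprod, b.equivFun, b.equivFun_intertwines fun i => ?_,
    b.equivFun_intertwines fun i => ?_, fun h => b.equivFun_intertwines fun i => ?_⟩
  · rw [hb, apply_powOrbit_eq_powOrbit_add_one hXr, ← hb, b.equivFun_self_eq_single, wX_single]
  · obtain ⟨j, rfl⟩ : ∃ j, i = j + 1 := ⟨i - 1, by ring⟩
    rw [hb, apply_powOrbit_add_one_eq_smul hXr hper hladder, ← hb, map_smul,
      b.equivFun_self_eq_single, wY_single]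
  · rw [hb, powOrbit, apply_pow_apply_of_mul_eq_smul_mul (hρX h) (hρv h), ← powOrbit, ← hb,
      map_smul, b.equivFun_self_eq_single, wRho_single]

/-- Case (VI)(iii), classification: assume that for every character `η` of `Γ` with
`η|_Λ = ξ` the degree-`r` polynomial `P_η(c) = c₀·c₁·⋯·c_{r−1} − 1` (in the variable
`c = c₀`) has `r` distinct roots (recorded as: its root set is a finite set of
cardinality `r`). Then every irreducible case-VI representation is isomorphic, via a
linear isomorphism intertwining `X`, `Y` and every `ρ(h)`, to `L(η, c)` for some
character `η` with `η|_Λ = ξ` and some root `c` of `P_η`. -/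
theorem caseVI_classification {Γ : Type*} [CommGroup Γ] [Fintype Γ] (g₁ g₂ : Γ)
    (χ₁ χ₂ : Γ →* ℂˣ) (hχ₂ : χ₂ = χ₁⁻¹) (h12 : χ₁ g₂ * χ₂ g₁ = 1)
    (r : ℕ) (hr : 1 < r) (hord : orderOf χ₁ = r)
    (hq : IsPrimitiveRoot ((χ₁ g₁ : ℂˣ) : ℂ) r)
    (ν : ℂ) (hν : ν ≠ 0)
    (Λ : Subgroup Γ) (hΛ : ∀ g : Γ, g ∈ Λ ↔ (χ₁ g = 1 ∧ χ₂ g = 1)) (ξ : ↥Λ →* ℂˣ)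
    (hroots : ∀ η : Γ →* ℂˣ, (∀ g : Λ, η (g : Γ) = ξ g) →
      ∃ S : Finset ℂ, S.card = r ∧ ∀ c : ℂ,
        (∏ i ∈ Finset.range r,
          cseq ((χ₁ g₁ : ℂˣ) : ℂ) ν ((η (g₁ * g₂) : ℂˣ) : ℂ) c i = 1) ↔ c ∈ S)
    (V : Type*) [AddCommGroup V] [Module ℂ V] [FiniteDimensional ℂ V]
    (ρ : Γ → Module.End ℂ V) (X Y : Module.End ℂ V)
    (hrep : IsRepVI g₁ g₂ χ₁ χ₂ ν Λ ξ r ρ X Y) (hirr : Irred2 ρ X Y) :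
    ∃ η : Γ →* ℂˣ, (∀ g : Λ, η (g : Γ) = ξ g) ∧
      ∃ c : ℂ, c ≠ 0 ∧
        (∏ i ∈ Finset.range r,
          cseq ((χ₁ g₁ : ℂˣ) : ℂ) ν ((η (g₁ * g₂) : ℂˣ) : ℂ) c i = 1) ∧
        ∃ φ : V ≃ₗ[ℂ] (ZMod r → ℂ),
          (∀ v : V, φ (X v) = wX r (φ v)) ∧
          (∀ v : V, φ (Y v) =
            wY r (cseq ((χ₁ g₁ : ℂˣ) : ℂ) ν ((η (g₁ * g₂) : ℂˣ) : ℂ) c) (φ v)) ∧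
          ∀ (h : Γ) (v : V), φ (ρ h v) = wRho r χ₁ η h (φ v) :=
  caseVI_classification_general g₁ g₂ χ₁ χ₂ hχ₂ h12 r hr hq ν Λ ξ V ρ X Y hrep hirr
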